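/- arXiv:1307.3293 — 2 statements merged into one kernel-verified Lean document; each statement's English description precedes it below -/
import Mathlib

section
/- Let G be a finite simple graph and L a list assignment on G with |L(v)| ≥ 4 for every vertex v. Suppose S is a set of vertices of G such that every vertex of S has degree exactly 4 in G, and the induced subgraph G[S] is a cycle with one chord (a cycle on |S| ≥ 4 vertices plus a single edge between two non-consecutive vertices of the cycle). If the induced subgraph of G on V(G) \ S has a proper L-coloring, then G has a proper L-coloring. -/
/-!
Colour `V ∖ S` first. A vertex `v ∈ S` then loses at most one colour of `L v` per neighbour
outside `S`, so at least `deg_{G[S]} v` colours remain. Hence it suffices that the cycle with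
one chord is degree-choosable: from an endpoint of the chord, colour greedily once around the
cycle. Each vertex only has to avoid its predecessor, except the other endpoint of the chord and
the last vertex, which also avoid the first colour; they can, having three colours, or (for the
last vertex, if it has only two) because the first colour was chosen outside its list.
-/

open SimpleGraph

namespace SimpleGraph

variable {V W α : Type*}

def IsListColoring (G : SimpleGraph V) (L : V → Finset α) (f : V → α) : Prop :=
  (∀ v, f v ∈ L v) ∧ ∀ x y, G.Adj x y → f x ≠ f y

variable (α) in
/-- `ncard` is `0` on an infinite neighbourhood, so this is meant for locally finite graphs. -/
def IsDegreeChoosable (H : SimpleGraph W) : Prop :=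
  ∀ A : W → Finset α, (∀ w, (H.neighborSet w).ncard ≤ (A w).card) → ∃ g, H.IsListColoring A g

theorem IsDegreeChoosable.of_iso {H : SimpleGraph V} {H' : SimpleGraph W}
    (h : H'.IsDegreeChoosable α) (e : H ≃g H') : H.IsDegreeChoosable α := by
  intro A hA
  obtain ⟨g, hgA, hg⟩ := h (A ∘ e.symm) fun w => by
    have := hA (e.symm w)
    rwa [← Set.ncard_image_of_injective _ e.injective, e.image_neighborSet,
      e.apply_symm_apply] at this
  exact ⟨g ∘ e, fun v => by simpa using hgA (e v), fun x y hxy => hg _ _ (e.map_adj_iff.mpr hxy)⟩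

open Classical in
theorem ncard_neighborSet_induce_le_card_filter [Fintype V] (G : SimpleGraph V)
    [DecidableRel G.Adj] {L : V → Finset α} {S : Set V} {v : V} (hv : v ∈ S)
    (hL : G.degree v ≤ (L v).card) (f : ↥Sᶜ → α) :
    ((G.induce S).neighborSet ⟨v, hv⟩).ncard ≤
      ((L v).filter fun c => ∀ w : ↥Sᶜ, G.Adj v w → f w ≠ c).card := by
  have hin : ((G.induce S).neighborSet ⟨v, hv⟩).ncard = (G.neighborSet v ∩ S).ncard := by
    rw [← Set.ncard_image_of_injective _ Subtype.val_injective]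
    congr 1
    ext w
    simp [and_comm]
  have hout : {w : ↥Sᶜ | G.Adj v w}.ncard = (G.neighborSet v \ S).ncard := by
    rw [← Set.ncard_image_of_injective _ Subtype.val_injective]
    congr 1
    ext w
    simp [and_comm]
  have hused : ((L v).filter fun c => ¬ ∀ w : ↥Sᶜ, G.Adj v w → f w ≠ c).card ≤
      {w : ↥Sᶜ | G.Adj v w}.ncard := by
    rw [← Set.ncard_coe_finset]
    refine (Set.ncard_le_ncard (t := f '' _) ?_).trans Set.ncard_image_le
    intro c hc
    simp only [Finset.coe_filter, not_forall, not_not, Set.mem_ofPred_eq] at hc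
    obtain ⟨-, w, hw, rfl⟩ := hc
    exact ⟨w, hw, rfl⟩
  have hdeg : (G.neighborSet v ∩ S).ncard + (G.neighborSet v \ S).ncard = G.degree v := by
    rw [Set.ncard_inter_add_ncard_sdiff_eq_ncard, Set.ncard_eq_toFinset_card',
      ← card_neighborFinset_eq_degree, neighborFinset]
  have := Finset.card_filter_add_card_filter_not (s := L v)
    (fun c => ∀ w : ↥Sᶜ, G.Adj v w → f w ≠ c)
  omega

theorem exists_isListColoring_of_induce_compl [Fintype V] {G : SimpleGraph V}
    [DecidableRel G.Adj] {L : V → Finset α} {S : Set V} (hS : (G.induce S).IsDegreeChoosable α)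
    (hL : ∀ v ∈ S, G.degree v ≤ (L v).card)
    (hcol : ∃ f, (G.induce Sᶜ).IsListColoring (fun v => L v) f) :
    ∃ f, G.IsListColoring L f := by
  classical
  obtain ⟨f, hfL, hf⟩ := hcol
  obtain ⟨g, hgA, hg⟩ := hS (fun v => (L v).filter fun c => ∀ w : ↥Sᶜ, G.Adj v w → f w ≠ c)
    fun v => ncard_neighborSet_induce_le_card_filter G v.2 (hL v v.2) f
  have hgf : ∀ x y (hx : x ∈ S) (hy : y ∉ S), G.Adj x y → g ⟨x, hx⟩ ≠ f ⟨y, hy⟩ :=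
    fun x y hx hy hxy => ((Finset.mem_filter.mp (hgA ⟨x, hx⟩)).2 ⟨y, hy⟩ hxy).symm
  refine ⟨fun v => if hv : v ∈ S then g ⟨v, hv⟩ else f ⟨v, hv⟩, fun v => ?_, fun x y hxy => ?_⟩
  · by_cases hv : v ∈ S
    · simpa [hv] using (Finset.mem_filter.mp (hgA ⟨v, hv⟩)).1
    · simpa [hv] using hfL ⟨v, hv⟩
  · by_cases hx : x ∈ S <;> by_cases hy : y ∈ S <;> simp only [hx, hy, dite_true, dite_false]
    · exact hg ⟨x, hx⟩ ⟨y, hy⟩ hxy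
    · exact hgf x y hx hy hxy
    · exact (hgf y x hy hx hxy.symm).symm
    · exact hf ⟨x, hx⟩ ⟨y, hy⟩ hxy

theorem exists_path_coloring (A : ℕ → Finset α) (P : ℕ → Prop) (c : α)
    (hA : ∀ t, 2 ≤ (A (t + 1)).card) (hP : ∀ t, P (t + 1) → 3 ≤ (A (t + 1)).card) :
    ∃ h : ℕ → α, h 0 = c ∧
      ∀ t, h (t + 1) ∈ A (t + 1) ∧ h (t + 1) ≠ h t ∧ (P (t + 1) → h (t + 1) ≠ c) := by
  classical
  have step : ∀ t a, ∃ b ∈ A (t + 1), b ≠ a ∧ (P (t + 1) → b ≠ c) := by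
    intro t a
    by_cases hPt : P (t + 1)
    · obtain ⟨b, hb, hbac⟩ := Finset.exists_mem_notMem_of_card_lt_card
        ((Finset.card_le_two (a := a) (b := c)).trans_lt (hP t hPt))
      simp only [Finset.mem_insert, Finset.mem_singleton, not_or] at hbac
      exact ⟨b, hb, hbac.1, fun _ => hbac.2⟩
    · obtain ⟨b, hb, hba⟩ := Finset.exists_mem_notMem_of_card_lt_card
        ((Finset.card_singleton a).trans_lt (hA t))
      exact ⟨b, hb, Finset.notMem_singleton.mp hba, fun h => absurd h hPt⟩
  choose next hnext using step
  exact ⟨fun t => Nat.rec c next t, rfl, fun t => hnext t _⟩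

open Fin.NatCast in
theorem exists_coloring_cycle_chord_zero {n : ℕ} {d : Fin (n + 2)} (hd : d ≠ 0)
    (B : Fin (n + 2) → Finset α) (hB : ∀ t, 2 ≤ (B t).card) (hB0 : 3 ≤ (B 0).card)
    (hBd : 3 ≤ (B d).card) :
    ∃ g : Fin (n + 2) → α, (∀ t, g t ∈ B t) ∧ (∀ t, g (t + 1) ≠ g t) ∧ g d ≠ g 0 := by
  classical
  set last := Fin.last (n + 1)
  -- The first colour must be kept off the last vertex, unless that vertex can avoid it itself.
  obtain ⟨c, hc0, hclast⟩ : ∃ c ∈ B 0, (B last).card < 3 → c ∉ B last := by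
    by_cases h3 : (B last).card < 3
    · obtain ⟨c, hc, hcl⟩ := Finset.exists_mem_notMem_of_card_lt_card (h3.trans_le hB0)
      exact ⟨c, hc, fun _ => hcl⟩
    · obtain ⟨c, hc⟩ := Finset.card_pos.mp (by omega : 0 < (B 0).card)
      exact ⟨c, hc, fun h => absurd h h3⟩
  obtain ⟨h, h0, hh⟩ := exists_path_coloring (fun t => B t)
    (fun t => t = d.val ∨ (t = n + 1 ∧ 3 ≤ (B last).card)) c (fun t => hB _) (by
      rintro t (ht | ⟨ht, h3⟩)
      · rwa [ht, Fin.cast_val_eq_self]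
      · rwa [ht, Fin.natCast_eq_last])
  have hmem : ∀ t : ℕ, h t ∈ B t
    | 0 => by simpa [h0] using hc0
    | t + 1 => (hh t).1
  have hlast : h (n + 1) ≠ c := by
    by_cases h3 : (B last).card < 3
    · intro hc
      have := hmem (n + 1)
      rw [hc, Fin.natCast_eq_last] at this
      exact hclast h3 this
    · exact (hh n).2.2 (Or.inr ⟨rfl, by omega⟩)
  refine ⟨fun t => h t, fun t => by simpa using hmem t, fun t => ?_, ?_⟩
  · show h (t + 1).val ≠ h t.val
    rw [Fin.val_add_one]
    split_ifs with ht
    · simpa [ht, h0] using hlast.symm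
    · exact (hh t).2.1
  · obtain ⟨t, ht⟩ : ∃ t, d.val = t + 1 := Nat.exists_eq_succ_of_ne_zero (Fin.val_ne_of_ne hd)
    simpa [ht, h0] using (hh t).2.2 (Or.inl ht.symm)

theorem exists_isListColoring_cycleGraph_sup_chord {m : ℕ} {i j : Fin m} (hne : i ≠ j)
    (A : Fin m → Finset α) (hA : ∀ k, 2 ≤ (A k).card) (hAi : 3 ≤ (A i).card)
    (hAj : 3 ≤ (A j).card) :
    ∃ g, (cycleGraph m ⊔ fromEdgeSet {s(i, j)}).IsListColoring A g := by
  obtain ⟨n, rfl⟩ : ∃ n, m = n + 2 :=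
    ⟨m - 2, by have := i.isLt; have := j.isLt; have := Fin.val_ne_of_ne hne; omega⟩
  obtain ⟨g, hgB, hg, hgd⟩ := exists_coloring_cycle_chord_zero (d := j - i)
    (sub_ne_zero.mpr hne.symm) (fun t => A (t + i)) (fun t => hA _)
    (by simpa using hAi) (by simpa using hAj)
  have hsucc : ∀ a b : Fin (n + 2), a - b = 1 → g (a - i) ≠ g (b - i) := fun a b hab => by
    simpa [show a - i = b - i + 1 by rw [← hab]; abel] using hg (b - i)
  refine ⟨fun k => g (k - i), fun k => by simpa using hgB (k - i), fun a b hab => ?_⟩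
  rcases hab with hab | ⟨hab, -⟩
  · rcases cycleGraph_adj.mp hab with hab | hab
    · exact hsucc a b hab
    · exact (hsucc b a hab).symm
  · rcases Sym2.eq_iff.mp (Set.mem_singleton_iff.mp hab) with ⟨rfl, rfl⟩ | ⟨rfl, rfl⟩
    · simpa using hgd.symm
    · simpa using hgd

theorem ncard_neighborSet_cycleGraph {m : ℕ} (hm : 3 ≤ m) (k : Fin m) :
    ((cycleGraph m).neighborSet k).ncard = 2 := by
  obtain ⟨n, rfl⟩ : ∃ n, m = n + 3 := ⟨m - 3, by omega⟩
  rw [Set.ncard_eq_toFinset_card', ← neighborFinset_def, card_neighborFinset_eq_degree,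
    cycleGraph_degree_three_le]

theorem three_le_ncard_neighborSet_cycleGraph_sup_chord {m : ℕ} (hm : 3 ≤ m) {i j : Fin m}
    (hne : i ≠ j) (hnc : ¬ (cycleGraph m).Adj i j) :
    3 ≤ ((cycleGraph m ⊔ fromEdgeSet {s(i, j)}).neighborSet i).ncard := by
  have hsub : insert j ((cycleGraph m).neighborSet i) ⊆
      (cycleGraph m ⊔ fromEdgeSet {s(i, j)}).neighborSet i := by
    rintro w (rfl | hw)
    · exact Or.inr ⟨rfl, hne⟩
    · exact Or.inl hw
  have := Set.ncard_le_ncard hsub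
  rwa [Set.ncard_insert_of_notMem (show j ∉ (cycleGraph m).neighborSet i from hnc),
    ncard_neighborSet_cycleGraph hm] at this

theorem isDegreeChoosable_cycleGraph_sup_chord {m : ℕ} (hm : 3 ≤ m) {i j : Fin m} (hne : i ≠ j)
    (hnc : ¬ (cycleGraph m).Adj i j) :
    (cycleGraph m ⊔ fromEdgeSet {s(i, j)}).IsDegreeChoosable α := by
  intro A hA
  have hj := three_le_ncard_neighborSet_cycleGraph_sup_chord hm hne.symm fun h => hnc h.symm
  rw [Sym2.eq_swap] at hj
  refine exists_isListColoring_cycleGraph_sup_chord hne A (fun k => ?_)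
    ((three_le_ncard_neighborSet_cycleGraph_sup_chord hm hne hnc).trans (hA i))
    (hj.trans (hA j))
  rw [← ncard_neighborSet_cycleGraph hm k]
  exact (Set.ncard_le_ncard fun w hw => Or.inl hw).trans (hA k)

end SimpleGraph

/-- Let `G` be a finite simple graph and `L` a list assignment with
`|L v| ≥ 4` for all `v`.  If `S` is a set of vertices all of degree exactly `4` in `G`
whose induced subgraph `G[S]` is a cycle with one chord (a cycle on `m ≥ 4` vertices plus
one edge between two distinct non-consecutive cycle vertices), and the induced subgraph
of `G` on the complement of `S` has a proper `L`-coloring, then `G` has a proper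
`L`-coloring. -/
theorem extend_coloring_chorded_cycle {V : Type*} [Fintype V]
    (G : SimpleGraph V) [DecidableRel G.Adj]
    (L : V → Finset ℕ) (hL : ∀ v, 4 ≤ (L v).card)
    (S : Set V) (hdeg : ∀ v ∈ S, G.degree v = 4)
    (m : ℕ) (hm : 4 ≤ m) (i j : Fin m) (hne : i ≠ j)
    (hnonconsec : ¬ (cycleGraph m).Adj i j)
    (hchord : Nonempty (G.induce S ≃g (cycleGraph m ⊔ fromEdgeSet {s(i, j)})))
    (hcol : ∃ f : ↥(Sᶜ) → ℕ, (∀ v : ↥(Sᶜ), f v ∈ L ↑v) ∧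
      ∀ x y, (G.induce Sᶜ).Adj x y → f x ≠ f y) :
    ∃ f : V → ℕ, (∀ v, f v ∈ L v) ∧ ∀ x y, G.Adj x y → f x ≠ f y := by
  obtain ⟨e⟩ := hchord
  have hS : (G.induce S).IsDegreeChoosable ℕ :=
    (isDegreeChoosable_cycleGraph_sup_chord (by omega) hne hnonconsec).of_iso e
  exact exists_isListColoring_of_induce_compl hS (fun v hv => (hdeg v hv).trans_le (hL v)) hcol
end

section
/- Let G be a finite simple graph and L a list assignment on G. Suppose S ⊆ V(G) is such that every vertex v ∈ S satisfies deg_G(v) ≤ |L(v)|, the induced subgraph G[S] is degree-choosable, and the induced subgraph of G on V(G) \ S has a proper L-coloring. Then G has a proper L-coloring. -/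
/-!
Colour `V ∖ S` first. A vertex `v ∈ S` then loses at most one colour of `L v` for each of its
neighbours outside `S`, so since `deg_G v ≤ |L v|` it keeps at least `deg_{G[S]} v` colours.
Degree-choosability of `G[S]` colours `S` from these residual lists, and the two colourings glue
to a proper `L`-colouring of `G`.
-/

open Finset

namespace SimpleGraph

variable {V α : Type*} (G : SimpleGraph V)

def IsProperListColoring (L : V → Finset α) (f : V → α) : Prop :=
  (∀ v, f v ∈ L v) ∧ ∀ x y, G.Adj x y → f x ≠ f y

variable {G}

theorem IsProperListColoring.mono {L L' : V → Finset α} {f : V → α}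
    (hf : G.IsProperListColoring L f) (hLL' : ∀ v, L v ⊆ L' v) :
    G.IsProperListColoring L' f :=
  ⟨fun v => hLL' v (hf.1 v), hf.2⟩

theorem IsProperListColoring.glue {S : Set V} [DecidablePred (· ∈ S)] {L : V → Finset α}
    {g : S → α} {f : ↥Sᶜ → α}
    (hg : (G.induce S).IsProperListColoring (L ∘ (↑)) g)
    (hf : (G.induce Sᶜ).IsProperListColoring (L ∘ (↑)) f)
    (hcross : ∀ (x : S) (y : ↥Sᶜ), G.Adj x y → g x ≠ f y) :
    G.IsProperListColoring L fun v => if hv : v ∈ S then g ⟨v, hv⟩ else f ⟨v, hv⟩ := by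
  refine ⟨fun v => ?_, fun x y hxy => ?_⟩
  · by_cases hv : v ∈ S
    · simpa [hv] using hg.1 ⟨v, hv⟩
    · simpa [hv] using hf.1 ⟨v, hv⟩
  · by_cases hx : x ∈ S <;> by_cases hy : y ∈ S <;> simp only [hx, hy, dite_true, dite_false]
    · exact hg.2 ⟨x, hx⟩ ⟨y, hy⟩ hxy
    · exact hcross ⟨x, hx⟩ ⟨y, hy⟩ hxy
    · exact (hcross ⟨y, hy⟩ ⟨x, hx⟩ hxy.symm).symm
    · exact hf.2 ⟨x, hx⟩ ⟨y, hy⟩ hxy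

variable [Fintype V] [DecidableRel G.Adj]

theorem ncard_induce_neighborSet_add_card_filter_notMem {S : Set V} [DecidablePred (· ∈ S)]
    (v : S) :
    ((G.induce S).neighborSet v).ncard + #{u ∈ G.neighborFinset v | u ∉ S} = G.degree v := by
  classical
  have hinter : G.neighborFinset v ∩ S.toFinset = {u ∈ G.neighborFinset v | u ∈ S} := by
    ext; simp
  rw [Set.ncard_eq_toFinset_card', ← neighborFinset_def, ← card_map (.subtype _),
    map_neighborFinset_induce, hinter, card_filter_add_card_filter_not,
    card_neighborFinset_eq_degree]

variable [DecidableEq α] {S : Set V} [DecidablePred (· ∈ S)]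

def outsideColors (f : ↥Sᶜ → α) (v : V) : Finset α :=
  ((G.neighborFinset v).subtype (· ∈ Sᶜ)).image f

theorem apply_mem_outsideColors (f : ↥Sᶜ → α) {v : V} {u : ↥Sᶜ} (huv : G.Adj v u) :
    f u ∈ G.outsideColors f v :=
  mem_image_of_mem f (by simpa using huv)

theorem card_outsideColors_le (f : ↥Sᶜ → α) (v : V) :
    #(G.outsideColors f v) ≤ #{u ∈ G.neighborFinset v | u ∉ S} :=
  (card_image_le).trans (card_subtype _ _).le

theorem ncard_induce_neighborSet_le_card_sdiff_outsideColors {L : V → Finset α}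
    (f : ↥Sᶜ → α) (v : S) (hv : G.degree v ≤ #(L v)) :
    ((G.induce S).neighborSet v).ncard ≤ #(L v \ G.outsideColors f v) := by
  have := G.ncard_induce_neighborSet_add_card_filter_notMem v
  have := G.card_outsideColors_le f v
  have := le_card_sdiff (G.outsideColors f v) (L v)
  omega

end SimpleGraph

/-- Let `G` be a finite simple graph and `L` a list assignment.  If
`S ⊆ V(G)` is such that every `v ∈ S` satisfies `deg_G(v) ≤ |L v|`, the induced subgraph
`G[S]` is degree-choosable, and the induced subgraph of `G` on the complement of `S` has
a proper `L`-coloring, then `G` has a proper `L`-coloring.  (The degree of a vertex `v`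
of `G[S]` is expressed as `((G.induce S).neighborSet v).ncard`.) -/
theorem extend_coloring_degree_choosable {V : Type*} [Fintype V]
    (G : SimpleGraph V) [DecidableRel G.Adj] (L : V → Finset ℕ)
    (S : Set V)
    (hdeg : ∀ v ∈ S, G.degree v ≤ (L v).card)
    (hdc : ∀ L' : ↥S → Finset ℕ,
      (∀ v : ↥S, ((G.induce S).neighborSet v).ncard ≤ (L' v).card) →
      ∃ g : ↥S → ℕ, (∀ v, g v ∈ L' v) ∧ ∀ x y, (G.induce S).Adj x y → g x ≠ g y)
    (hcol : ∃ f : ↥(Sᶜ) → ℕ, (∀ v : ↥(Sᶜ), f v ∈ L ↑v) ∧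
      ∀ x y, (G.induce Sᶜ).Adj x y → f x ≠ f y) :
    ∃ f : V → ℕ, (∀ v, f v ∈ L v) ∧ ∀ x y, G.Adj x y → f x ≠ f y := by
  classical
  obtain ⟨f, hf⟩ := hcol
  obtain ⟨g, hg⟩ := hdc (fun v => L v \ G.outsideColors f v) fun v =>
    G.ncard_induce_neighborSet_le_card_sdiff_outsideColors f v (hdeg v v.2)
  have hgL : (G.induce S).IsProperListColoring (L ∘ (↑)) g :=
    SimpleGraph.IsProperListColoring.mono hg fun v => sdiff_subset
  exact ⟨_, hgL.glue hf fun x y hxy hxy_eq =>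
    (mem_sdiff.mp (hg.1 x)).2 (hxy_eq ▸ G.apply_mem_outsideColors f hxy)⟩
end
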